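/- arXiv:2211.04705 — 4 statements merged into one kernel-verified Lean document; each statement's English description precedes it below -/
import Mathlib

section
/- Let g : ℝⁿ → ℝ be continuously differentiable, let r₁,…,r_s ∈ ℝⁿ and ρ > 0. Suppose sequences of n×n positive definite matrices H^t, vectors z_i^t, x̂^t, λ_i^t ∈ ℝⁿ (i = 1,…,s), and multipliers ϖ_i^{t} ≥ 0, ψ^{t} ∈ ℝ satisfy, for every t ≥ 0 and every i ∈ {1,…,s}: (a) (H^{t+1})⁻¹ = Σ_{i=1}^s ϖ_i^{t+1}(r_i − z_i^{t+1})(r_i − z_i^{t+1})ᵀ; (b) −λ_i^{t} − ρ(x̂^{t} − z_i^{t+1}) − 2ϖ_i^{t+1} H^{t+1}(r_i − z_i^{t+1}) = 0; (c) (r_i − z_i^{t+1})ᵀ H^{t+1}(r_i − z_i^{t+1}) ≤ 1; (d) ϖ_i^{t+1}((r_i − z_i^{t+1})ᵀ H^{t+1}(r_i − z_i^{t+1}) − 1) = 0; (e) Σ_{i=1}^s λ_i^{t} + ρ Σ_{i=1}^s (x̂^{t+1} − z_i^{t+1}) + ψ^{t+1} ∇g(x̂^{t+1}) = 0 and g(x̂^{t+1})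 = 0; (f) λ_i^{t+1} = λ_i^{t} + ρ(x̂^{t+1} − z_i^{t+1}). Assume moreover that z_i^{t} − x̂^{t} → 0 for each i and x̂^{t+1} − x̂^{t} → 0 as t → ∞. Then along any subsequence on which (H^{t}, x̂^{t}, (ϖ_i^{t})_{i=1}^s, ψ^{t}) converges to a limit (H*, x̂*, (ϖ_i*)_{i=1}^s, ψ*) with H* positive definite, the limit is a KKT point of the problem min_{H ≻ 0, x̂} −log det H subject to (r_i − x̂)ᵀ H (r_i − x̂) ≤ 1 (i = 1,…,s) and g(x̂) = 0; that is: (H*)⁻¹ = Σ_{i=1}^s ϖ_i*(r_i − x̂*)(r_i − x̂*)ᵀ; ψ* ∇g(x̂*) − 2 Σ_{i=1}^s ϖ_i* H*(r_i − x̂*) = 0; ϖ_i* ≥ 0; (r_i − x̂*)ᵀ H*(r_i − x̂*) ≤ 1; g(x̂*) = 0; and ϖ_i*((r_i − x̂*)ᵀ H*(r_i − x̂*) − 1) = 0 for all i. -/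
open Matrix Filter Topology

set_option maxHeartbeats 2000000 in
/-- Weak convergence of the consensus-ADMM iterates: any (positive definite)
limit point of the iterates is a KKT point of the discretized SIP
`min -log det H  s.t. (rᵢ - x̂)ᵀ H (rᵢ - x̂) ≤ 1, g(x̂) = 0`. -/
theorem admm_limit_point_is_KKT {n s : ℕ}
    (g : (Fin n → ℝ) → ℝ) (gradg : (Fin n → ℝ) → (Fin n → ℝ))
    (hgC1 : ContDiff ℝ 1 g)
    (hgrad : ∀ x u : Fin n → ℝ, fderiv ℝ g x u = gradg x ⬝ᵥ u)
    (r : Fin s → Fin n → ℝ) (ρ : ℝ) (hρ : 0 < ρ)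
    (H : ℕ → Matrix (Fin n) (Fin n) ℝ)
    (z : Fin s → ℕ → Fin n → ℝ)
    (xhat : ℕ → Fin n → ℝ)
    (lam : Fin s → ℕ → Fin n → ℝ)
    (ϖ : Fin s → ℕ → ℝ) (ψ : ℕ → ℝ)
    (hHpd : ∀ t, (H t).PosDef)
    (hϖ : ∀ (i : Fin s) (t : ℕ), 0 ≤ ϖ i t)
    -- (a)
    (ha : ∀ t : ℕ, (H (t + 1))⁻¹ =
      ∑ i, ϖ i (t + 1) • vecMulVec (r i - z i (t + 1)) (r i - z i (t + 1)))
    -- (b)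
    (hb : ∀ (t : ℕ) (i : Fin s),
      -(lam i t) - ρ • (xhat t - z i (t + 1))
        - (2 * ϖ i (t + 1)) • ((H (t + 1)) *ᵥ (r i - z i (t + 1))) = 0)
    -- (c)
    (hc : ∀ (t : ℕ) (i : Fin s),
      (r i - z i (t + 1)) ⬝ᵥ ((H (t + 1)) *ᵥ (r i - z i (t + 1))) ≤ 1)
    -- (d)
    (hd : ∀ (t : ℕ) (i : Fin s),
      ϖ i (t + 1) * ((r i - z i (t + 1)) ⬝ᵥ ((H (t + 1)) *ᵥ (r i - z i (t + 1))) - 1) = 0)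
    -- (e)
    (he : ∀ t : ℕ,
      (∑ i, lam i t) + ρ • (∑ i, (xhat (t + 1) - z i (t + 1)))
        + ψ (t + 1) • gradg (xhat (t + 1)) = 0)
    (hge : ∀ t : ℕ, g (xhat (t + 1)) = 0)
    -- (f)
    (hf : ∀ (t : ℕ) (i : Fin s),
      lam i (t + 1) = lam i t + ρ • (xhat (t + 1) - z i (t + 1)))
    -- assumptions (18)-(19)
    (hztox : ∀ i : Fin s, Tendsto (fun t => z i t - xhat t) atTop (𝓝 0))
    (hxdiff : Tendsto (fun t => xhat (t + 1) - xhat t) atTop (𝓝 0))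
    -- a convergent subsequence with positive definite limit
    (φ : ℕ → ℕ) (hφ : StrictMono φ)
    (Hstar : Matrix (Fin n) (Fin n) ℝ) (xstar : Fin n → ℝ)
    (ϖstar : Fin s → ℝ) (ψstar : ℝ)
    (hHlim : Tendsto (fun t => H (φ t)) atTop (𝓝 Hstar))
    (hxlim : Tendsto (fun t => xhat (φ t)) atTop (𝓝 xstar))
    (hϖlim : ∀ i : Fin s, Tendsto (fun t => ϖ i (φ t)) atTop (𝓝 (ϖstar i)))
    (hψlim : Tendsto (fun t => ψ (φ t)) atTop (𝓝 ψstar))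
    (hHstarpd : Hstar.PosDef) :
    Hstar⁻¹ = ∑ i, ϖstar i • vecMulVec (r i - xstar) (r i - xstar) ∧
    ψstar • gradg xstar - (2 : ℝ) • ∑ i, ϖstar i • (Hstar *ᵥ (r i - xstar)) = 0 ∧
    (∀ i : Fin s, 0 ≤ ϖstar i) ∧
    (∀ i : Fin s, (r i - xstar) ⬝ᵥ (Hstar *ᵥ (r i - xstar)) ≤ 1) ∧
    g xstar = 0 ∧
    (∀ i : Fin s, ϖstar i * ((r i - xstar) ⬝ᵥ (Hstar *ᵥ (r i - xstar)) - 1) = 0) := by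
  classical
  -- reindex: σ t + 1 = φ (t+1)
  set σ : ℕ → ℕ := fun t => φ (t + 1) - 1 with hσdef
  have hσ1 : ∀ t, σ t + 1 = φ (t + 1) := by
    intro t
    have h1 : t + 1 ≤ φ (t + 1) := hφ.le_apply
    simp only [hσdef]
    omega
  have hσtop : Tendsto σ atTop atTop := by
    apply tendsto_atTop_mono (f := id) (fun t => ?_) tendsto_id
    have h1 : t + 1 ≤ φ (t + 1) := hφ.le_apply
    simp only [hσdef, id]
    omega
  have hσ1top : Tendsto (fun t => σ t + 1) atTop atTop :=
    (tendsto_add_atTop_nat 1).comp hσtop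
  -- subsequence transfer
  have key : ∀ {α : Type} [TopologicalSpace α] (f : ℕ → α) (L : α),
      Tendsto (fun t => f (φ t)) atTop (𝓝 L) →
      Tendsto (fun t => f (σ t + 1)) atTop (𝓝 L) := by
    intro α _ f L hL
    have h2 : Tendsto (fun t => f (φ (t + 1))) atTop (𝓝 L) :=
      hL.comp (tendsto_add_atTop_nat 1)
    exact h2.congr (fun t => by rw [hσ1])
  have hH1 : Tendsto (fun t => H (σ t + 1)) atTop (𝓝 Hstar) := key _ _ hHlim
  have hx1 : Tendsto (fun t => xhat (σ t + 1)) atTop (𝓝 xstar) := key _ _ hxlim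
  have hϖ1 : ∀ i, Tendsto (fun t => ϖ i (σ t + 1)) atTop (𝓝 (ϖstar i)) :=
    fun i => key _ _ (hϖlim i)
  have hψ1 : Tendsto (fun t => ψ (σ t + 1)) atTop (𝓝 ψstar) := key _ _ hψlim
  have hz1 : ∀ i, Tendsto (fun t => z i (σ t + 1)) atTop (𝓝 xstar) := by
    intro i
    have h0 : Tendsto (fun t => z i (σ t + 1) - xhat (σ t + 1)) atTop (𝓝 0) :=
      (hztox i).comp hσ1top
    have := h0.add hx1
    simpa using this
  have hΔx : Tendsto (fun t => xhat (σ t + 1) - xhat (σ t)) atTop (𝓝 0) :=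
    hxdiff.comp hσtop
  have hd1 : ∀ i, Tendsto (fun t => r i - z i (σ t + 1)) atTop (𝓝 (r i - xstar)) :=
    fun i => tendsto_const_nhds.sub (hz1 i)
  -- limit of H *ᵥ d
  have hHv : ∀ i, Tendsto (fun t => H (σ t + 1) *ᵥ (r i - z i (σ t + 1))) atTop
      (𝓝 (Hstar *ᵥ (r i - xstar))) := by
    intro i
    have hcont : Continuous (fun p : Matrix (Fin n) (Fin n) ℝ × (Fin n → ℝ) =>
        p.1 *ᵥ p.2) := continuous_fst.matrix_mulVec continuous_snd
    exact (hcont.tendsto (Hstar, r i - xstar)).comp (hH1.prodMk_nhds (hd1 i))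
  -- limit of quadratic forms
  have hq : ∀ i, Tendsto
      (fun t => (r i - z i (σ t + 1)) ⬝ᵥ (H (σ t + 1) *ᵥ (r i - z i (σ t + 1))))
      atTop (𝓝 ((r i - xstar) ⬝ᵥ (Hstar *ᵥ (r i - xstar)))) := by
    intro i
    have hcont : Continuous (fun p : (Fin n → ℝ) × (Fin n → ℝ) => p.1 ⬝ᵥ p.2) :=
      continuous_fst.dotProduct continuous_snd
    exact (hcont.tendsto (r i - xstar, Hstar *ᵥ (r i - xstar))).comp
      ((hd1 i).prodMk_nhds (hHv i))
  -- conclusion (3)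
  have c3 : ∀ i : Fin s, 0 ≤ ϖstar i := fun i =>
    ge_of_tendsto' (hϖ1 i) (fun t => hϖ i (σ t + 1))
  -- conclusion (4)
  have c4 : ∀ i : Fin s, (r i - xstar) ⬝ᵥ (Hstar *ᵥ (r i - xstar)) ≤ 1 := fun i =>
    le_of_tendsto' (hq i) (fun t => hc (σ t) i)
  -- conclusion (5)
  have c5 : g xstar = 0 := by
    have h1 : Tendsto (fun t => g (xhat (σ t + 1))) atTop (𝓝 (g xstar)) :=
      (hgC1.continuous.tendsto xstar).comp hx1
    have h2 : Tendsto (fun t => g (xhat (σ t + 1))) atTop (𝓝 0) := by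
      simp only [hge]; exact tendsto_const_nhds
    exact tendsto_nhds_unique h1 h2
  -- conclusion (6)
  have c6 : ∀ i : Fin s,
      ϖstar i * ((r i - xstar) ⬝ᵥ (Hstar *ᵥ (r i - xstar)) - 1) = 0 := by
    intro i
    have h1 : Tendsto (fun t => ϖ i (σ t + 1) *
        ((r i - z i (σ t + 1)) ⬝ᵥ (H (σ t + 1) *ᵥ (r i - z i (σ t + 1))) - 1)) atTop
        (𝓝 (ϖstar i * ((r i - xstar) ⬝ᵥ (Hstar *ᵥ (r i - xstar)) - 1))) :=
      (hϖ1 i).mul ((hq i).sub tendsto_const_nhds)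
    have h2 : Tendsto (fun t => ϖ i (σ t + 1) *
        ((r i - z i (σ t + 1)) ⬝ᵥ (H (σ t + 1) *ᵥ (r i - z i (σ t + 1))) - 1)) atTop
        (𝓝 0) := by
      simp only [fun t => hd (σ t) i]; exact tendsto_const_nhds
    exact tendsto_nhds_unique h1 h2
  -- conclusion (1)
  have c1 : Hstar⁻¹ = ∑ i, ϖstar i • vecMulVec (r i - xstar) (r i - xstar) := by
    have hdet : Hstar.det ≠ 0 := ne_of_gt hHstarpd.det_pos
    have hinvC : ContinuousAt Inv.inv Hstar := by
      apply continuousAt_matrix_inv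
      rw [Ring.inverse_eq_inv']
      exact continuousAt_inv₀ hdet
    have h1 : Tendsto (fun t => (H (σ t + 1))⁻¹) atTop (𝓝 Hstar⁻¹) :=
      hinvC.tendsto.comp hH1
    have h2 : Tendsto (fun t => ∑ i, ϖ i (σ t + 1) •
        vecMulVec (r i - z i (σ t + 1)) (r i - z i (σ t + 1))) atTop
        (𝓝 (∑ i, ϖstar i • vecMulVec (r i - xstar) (r i - xstar))) := by
      apply tendsto_finset_sum
      intro i _
      have hcont : Continuous (fun p : (Fin n → ℝ) × (Fin n → ℝ) =>
          vecMulVec p.1 p.2) := continuous_fst.matrix_vecMulVec continuous_snd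
      exact (hϖ1 i).smul
        ((hcont.tendsto (r i - xstar, r i - xstar)).comp ((hd1 i).prodMk_nhds (hd1 i)))
    have h1' : Tendsto (fun t => ∑ i, ϖ i (σ t + 1) •
        vecMulVec (r i - z i (σ t + 1)) (r i - z i (σ t + 1))) atTop (𝓝 Hstar⁻¹) :=
      h1.congr (fun t => ha (σ t))
    exact tendsto_nhds_unique h1' h2
  -- lam limit
  have hlamlim : ∀ i, Tendsto (fun t => lam i (σ t + 1)) atTop
      (𝓝 (-((2 * ϖstar i) • (Hstar *ᵥ (r i - xstar))))) := by
    intro i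
    have hexp : ∀ t, lam i (σ t + 1) =
        ρ • (xhat (σ t + 1) - xhat (σ t))
          - (2 * ϖ i (σ t + 1)) • (H (σ t + 1) *ᵥ (r i - z i (σ t + 1))) := by
      intro t
      have h1 := hb (σ t) i
      have h2 := hf (σ t) i
      rw [h2]
      rw [sub_sub, sub_eq_zero] at h1
      have hl : lam i (σ t) = -(ρ • (xhat (σ t) - z i (σ t + 1))
          + (2 * ϖ i (σ t + 1)) • (H (σ t + 1) *ᵥ (r i - z i (σ t + 1)))) :=
        neg_eq_iff_eq_neg.mp h1
      rw [hl]
      module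
    have h1 : Tendsto (fun t => ρ • (xhat (σ t + 1) - xhat (σ t))
        - (2 * ϖ i (σ t + 1)) • (H (σ t + 1) *ᵥ (r i - z i (σ t + 1)))) atTop
        (𝓝 (ρ • (0 : Fin n → ℝ) - (2 * ϖstar i) • (Hstar *ᵥ (r i - xstar)))) :=
      (hΔx.const_smul ρ).sub
        (((hϖ1 i).const_mul 2).smul (hHv i))
    have h1' := h1.congr (fun t => (hexp t).symm)
    simpa using h1'
  -- continuity of gradg
  have hgradg_cont : Continuous gradg := by
    have hfd : Continuous (fun x => fderiv ℝ g x) := hgC1.continuous_fderiv one_ne_zero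
    have heq : ∀ x j, gradg x j = fderiv ℝ g x (Pi.single j 1) := by
      intro x j
      rw [hgrad x (Pi.single j 1), dotProduct_single, mul_one]
    apply continuous_pi
    intro j
    have : (fun x => gradg x j) = fun x => fderiv ℝ g x (Pi.single j 1) :=
      funext fun x => heq x j
    rw [this]
    exact hfd.clm_apply continuous_const
  -- conclusion (2)
  have c2 : ψstar • gradg xstar
      - (2 : ℝ) • ∑ i, ϖstar i • (Hstar *ᵥ (r i - xstar)) = 0 := by
    have he' : ∀ t, (∑ i, lam i (σ t + 1)) + ψ (σ t + 1) • gradg (xhat (σ t + 1)) = 0 := by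
      intro t
      have h0 := he (σ t)
      have hsum : (∑ i, lam i (σ t + 1)) =
          (∑ i, lam i (σ t)) + ρ • (∑ i, (xhat (σ t + 1) - z i (σ t + 1))) := by
        rw [Finset.smul_sum, ← Finset.sum_add_distrib]
        exact Finset.sum_congr rfl fun i _ => hf (σ t) i
      rw [hsum]
      rw [← h0]
    have h1 : Tendsto (fun t => (∑ i, lam i (σ t + 1))
        + ψ (σ t + 1) • gradg (xhat (σ t + 1))) atTop
        (𝓝 ((∑ i, -((2 * ϖstar i) • (Hstar *ᵥ (r i - xstar))))
          + ψstar • gradg xstar)) := by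
      apply Tendsto.add
      · exact tendsto_finset_sum _ fun i _ => hlamlim i
      · exact (hψ1).smul ((hgradg_cont.tendsto xstar).comp hx1)
    have h2 : Tendsto (fun t => (∑ i, lam i (σ t + 1))
        + ψ (σ t + 1) • gradg (xhat (σ t + 1))) atTop (𝓝 0) := by
      simp only [he']; exact tendsto_const_nhds
    have h3 := tendsto_nhds_unique h1 h2
    have hrw : (∑ i, -((2 * ϖstar i) • (Hstar *ᵥ (r i - xstar))))
        = -((2 : ℝ) • ∑ i, ϖstar i • (Hstar *ᵥ (r i - xstar))) := by
      rw [Finset.smul_sum, ← Finset.sum_neg_distrib]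
      exact Finset.sum_congr rfl fun i _ => by rw [smul_smul]
    rw [hrw] at h3
    rw [sub_eq_zero]
    rw [← sub_eq_zero] at h3 ⊢
    linear_combination (norm := module) h3
  exact ⟨c1, c2, c3, c4, c5, c6⟩
end

section
/- Let α₁,…,α_s ∈ ℝⁿ span ℝⁿ. Suppose μ* = (μ₁*,…,μ_s*) with μ_i* ≥ 0 and Σ_{i=1}^s μ_i* = 1 maximizes μ ↦ log det(Σ_{i=1}^s μ_i α_i α_iᵀ) over the probability simplex {μ ∈ ℝ^s : μ ≥ 0, Σ_i μ_i = 1}, and assume M* = Σ_{i=1}^s μ_i* α_i α_iᵀ is positive definite. Then P* = n M* is an optimal solution of min_{P ≻ 0} log det P subject to α_iᵀ P⁻¹ α_i ≤ 1 for all i = 1,…,s; that is, P* is feasible (α_iᵀ (P*)⁻¹ α_i ≤ 1 for all i) and log det P* ≤ log det P for every positive definite n×n matrix P with α_iᵀ P⁻¹ α_i ≤ 1 for all i. -/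
open Matrix

private lemma trace_mul_vecMulVec' {n : ℕ} (A : Matrix (Fin n) (Fin n) ℝ) (u v : Fin n → ℝ) :
    (A * vecMulVec u v).trace = v ⬝ᵥ (A *ᵥ u) := by
  simp only [Matrix.trace, Matrix.diag, Matrix.mul_apply, vecMulVec_apply, dotProduct,
    mulVec, Finset.mul_sum]
  exact Finset.sum_congr rfl fun i _ => Finset.sum_congr rfl fun j _ => by ring

private lemma trace_eq_sum_eigs' {n : ℕ} {Q : Matrix (Fin n) (Fin n) ℝ} (hQ : Q.IsHermitian) :
    Q.trace = ∑ i, hQ.eigenvalues i := by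
  nth_rewrite 1 [hQ.spectral_theorem]
  rw [Unitary.conjStarAlgAut_apply, Matrix.trace_mul_cycle]
  rw [mem_unitaryGroup_iff'.mp (hQ.eigenvectorUnitary).2, Matrix.one_mul]
  simp [Matrix.trace_diagonal]

private lemma det_add_vecMulVec' {n : ℕ} {A : Matrix (Fin n) (Fin n) ℝ} (hA : IsUnit A.det)
    (u v : Fin n → ℝ) :
    (A + vecMulVec u v).det = A.det * (1 + v ⬝ᵥ A⁻¹ *ᵥ u) := by
  rw [vecMulVec_eq (Fin 1), det_add_replicateCol_mul_replicateRow hA]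
  congr 1
  rw [Matrix.mul_assoc, ← replicateCol_mulVec]
  simp [Matrix.det_unique, Matrix.add_apply, Matrix.one_apply, replicateRow_mul_replicateCol_apply]

private lemma amgm' {n : ℕ} (hn : 0 < n) (z : Fin n → ℝ) (hz : ∀ i, 0 ≤ z i) :
    ∏ i, z i ≤ ((∑ i, z i) / n) ^ n := by
  have hn' : (n : ℝ) ≠ 0 := Nat.cast_ne_zero.mpr hn.ne'
  have h := Real.geom_mean_le_arith_mean_weighted Finset.univ (fun _ => (n:ℝ)⁻¹) z
      (fun _ _ => by positivity) (by simp [Finset.card_univ]; field_simp) (fun i _ => hz i)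
  have key : ∏ i, z i = (∏ i, z i ^ ((n:ℝ)⁻¹)) ^ n := by
    rw [← Finset.prod_pow]
    refine Finset.prod_congr rfl fun i _ => ?_
    rw [← Real.rpow_natCast (z i ^ ((n:ℝ)⁻¹)) n, ← Real.rpow_mul (hz i),
      inv_mul_cancel₀ hn', Real.rpow_one]
  have hsum : ∑ i, (n:ℝ)⁻¹ * z i = (∑ i, z i) / n := by
    rw [← Finset.mul_sum]; ring
  rw [key, ← hsum]
  exact pow_le_pow_left₀ (Finset.prod_nonneg fun i _ => Real.rpow_nonneg (hz i) _) h n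

open scoped MatrixOrder in
private lemma weak_duality' {n : ℕ} (hn : 0 < n) {M P : Matrix (Fin n) (Fin n) ℝ}
    (hM : M.PosSemidef) (hP : P.PosDef) (htr : (P⁻¹ * M).trace ≤ 1) :
    (n:ℝ)^n * M.det ≤ P.det := by
  have hn' : (0:ℝ) < n := Nat.cast_pos.mpr hn
  have hPinv : (P⁻¹).PosDef := hP.inv
  set R := CFC.sqrt (P⁻¹) with hRdef
  have hRR : R * R = P⁻¹ := CFC.sqrt_mul_sqrt_self (P⁻¹) hPinv.posSemidef.nonneg
  have hRH : R.IsHermitian := (CFC.sqrt_nonneg (P⁻¹)).posSemidef.1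
  have hQ : (R * M * R).PosSemidef := by
    have := hM.mul_mul_conjTranspose_same R
    rwa [hRH.eq] at this
  set Q := R * M * R with hQdef
  have htrQ : Q.trace = (P⁻¹ * M).trace := by
    rw [hQdef, Matrix.trace_mul_cycle, hRR]
  have hdetQ : Q.det = M.det * (P.det)⁻¹ := by
    have hRdet : R.det * R.det = (P⁻¹).det := by rw [← Matrix.det_mul, hRR]
    have hPdet : (P⁻¹).det = (P.det)⁻¹ := by
      have h1 : P.det * (P⁻¹).det = 1 := by
        rw [← Matrix.det_mul, Matrix.mul_nonsing_inv P hP.det_pos.ne'.isUnit, Matrix.det_one]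
      exact eq_inv_of_mul_eq_one_left (by linarith [h1] : (P⁻¹).det * P.det = 1)
    rw [hQdef, Matrix.det_mul, Matrix.det_mul]
    calc R.det * M.det * R.det = M.det * (R.det * R.det) := by ring
      _ = M.det * (P.det)⁻¹ := by rw [hRdet, hPdet]
  have heig : Q.det = ∏ i, hQ.1.eigenvalues i := by
    simpa using hQ.1.det_eq_prod_eigenvalues
  have htre : Q.trace = ∑ i, hQ.1.eigenvalues i := trace_eq_sum_eigs' hQ.1
  have hl : ∀ i, 0 ≤ hQ.1.eigenvalues i := fun i => hQ.eigenvalues_nonneg i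
  have h1 : M.det * (P.det)⁻¹ ≤ ((Q.trace)/n)^n := by
    rw [← hdetQ, heig, htre]; exact amgm' hn _ hl
  have htrQ0 : 0 ≤ Q.trace := by rw [htre]; exact Finset.sum_nonneg fun i _ => hl i
  have htrQ1 : Q.trace ≤ 1 := htrQ ▸ htr
  have h2 : (Q.trace/n)^n ≤ ((n:ℝ)^n)⁻¹ := by
    rw [← inv_pow]
    exact pow_le_pow_left₀ (by positivity) (by rw [div_le_iff₀ hn', inv_mul_cancel₀ hn'.ne']; exact htrQ1) n
  have h3 : M.det * (P.det)⁻¹ ≤ ((n:ℝ)^n)⁻¹ := h1.trans h2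
  have hPd : 0 < P.det := hP.det_pos
  have h4 := mul_le_mul_of_nonneg_right h3 hPd.le
  rw [mul_assoc, inv_mul_cancel₀ hPd.ne', mul_one] at h4
  calc (n:ℝ)^n * M.det ≤ (n:ℝ)^n * (((n:ℝ)^n)⁻¹ * P.det) :=
        mul_le_mul_of_nonneg_left h4 (by positivity)
    _ = P.det := by field_simp

/-- If `μ*` maximizes the D-optimal design objective `det (Σ μᵢ αᵢαᵢᵀ)` over the
probability simplex and `M* = Σ μᵢ* αᵢαᵢᵀ` is positive definite, then `P* = n M*`
solves `min log det P  s.t.  αᵢᵀ P⁻¹ αᵢ ≤ 1, P ≻ 0`. -/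
theorem dual_optimal_gives_primal_optimal {n s : ℕ}
    (α : Fin s → Fin n → ℝ)
    (hspan : Submodule.span ℝ (Set.range α) = (⊤ : Submodule ℝ (Fin n → ℝ)))
    (μ : Fin s → ℝ) (hμ0 : ∀ i, 0 ≤ μ i) (hμ1 : ∑ i, μ i = 1)
    (M : Matrix (Fin n) (Fin n) ℝ)
    (hM : M = ∑ i, μ i • vecMulVec (α i) (α i))
    (hMpd : M.PosDef)
    (hmax : ∀ ν : Fin s → ℝ, (∀ i, 0 ≤ ν i) → ∑ i, ν i = 1 →
      (∑ i, ν i • vecMulVec (α i) (α i)).det ≤ M.det) :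
    ((n : ℝ) • M).PosDef ∧
    (∀ i : Fin s, α i ⬝ᵥ (((n : ℝ) • M)⁻¹ *ᵥ α i) ≤ 1) ∧
    (∀ P : Matrix (Fin n) (Fin n) ℝ, P.PosDef →
      (∀ i : Fin s, α i ⬝ᵥ (P⁻¹ *ᵥ α i) ≤ 1) →
      Real.log ((n : ℝ) • M).det ≤ Real.log P.det) := by
  rcases Nat.eq_zero_or_pos n with hn0 | hn
  · subst hn0
    refine ⟨⟨Matrix.ext fun i _ => i.elim0, fun x hx => absurd (Subsingleton.elim x 0) hx⟩,
      fun i => ?_, fun P hP hfeas => ?_⟩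
    · simp [dotProduct]
    · simp [Matrix.det_isEmpty]
  have hnR : (0:ℝ) < n := Nat.cast_pos.mpr hn
  have hn1 : (1:ℝ) ≤ (n:ℝ) := Nat.one_le_cast.mpr hn
  have hMdet : 0 < M.det := hMpd.det_pos
  -- Key claim: αᵢᵀ M⁻¹ αᵢ ≤ n for every i
  have hkey : ∀ i, α i ⬝ᵥ M⁻¹ *ᵥ α i ≤ n := by
    intro i
    by_contra hc
    push_neg at hc
    set c := α i ⬝ᵥ M⁻¹ *ᵥ α i with hcdef
    have hc1 : (1:ℝ) < c := lt_of_le_of_lt hn1 hc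
    set D := ((n:ℝ) - 1) * (c - 1) with hDdef
    have hD0 : 0 ≤ D := mul_nonneg (by linarith) (by linarith)
    have hden : (0:ℝ) < D + (c - n) + 1 := by nlinarith
    set t := (c - n) / (D + (c - n) + 1) with htdef
    have ht0 : 0 < t := div_pos (by linarith) hden
    have ht1 : t < 1 := by
      rw [htdef, div_lt_one hden]; linarith
    have htD : t * D < c - n := by
      rw [htdef, div_mul_eq_mul_div, div_lt_iff₀ hden]
      nlinarith
    -- the perturbed weights
    set ν : Fin s → ℝ := fun j => (1 - t) * μ j + if j = i then t else 0 with hνdef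
    clear_value c D t ν
    have hν0 : ∀ j, 0 ≤ ν j := fun j => by
      have h9 : (0:ℝ) ≤ if j = i then t else 0 := by split <;> simp [ht0.le]
      simp only [hνdef]
      exact add_nonneg (mul_nonneg (by linarith) (hμ0 j)) h9
    have hν1 : ∑ j, ν j = 1 := by
      have hti : ∑ j, (if j = i then t else 0) = t := by simp
      simp only [hνdef]
      rw [Finset.sum_add_distrib, ← Finset.mul_sum, hμ1, hti]
      ring
    have hsum : ∑ j, ν j • vecMulVec (α j) (α j)
        = (1 - t) • M + t • vecMulVec (α i) (α i) := by
      have h2 : ∀ j, ν j • vecMulVec (α j) (α j)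
          = (1 - t) • (μ j • vecMulVec (α j) (α j))
            + (if j = i then t • vecMulVec (α i) (α i) else 0) := by
        intro j
        by_cases hji : j = i
        · subst hji
          simp [hνdef, add_smul, smul_smul]
        · simp only [hνdef, if_neg hji, add_zero, add_smul, smul_smul]
      simp only [h2]
      rw [Finset.sum_add_distrib, ← Finset.smul_sum, ← hM]
      congr 1
      simp
    have hineq := hmax ν hν0 hν1
    rw [hsum] at hineq
    -- compute the determinant
    have h1t : (0:ℝ) < 1 - t := by linarith
    have hsm : t • vecMulVec (α i) (α i) = vecMulVec (t • α i) (α i) := by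
      ext j k
      simp only [Matrix.smul_apply, vecMulVec_apply, Pi.smul_apply, smul_eq_mul]
      ring
    have hAdet : ((1 - t) • M).det = (1 - t)^n * M.det := by
      rw [det_smul]; simp
    have hAu : IsUnit ((1 - t) • M).det := by
      rw [hAdet]; exact (mul_pos (pow_pos h1t n) hMdet).ne'.isUnit
    haveI : Invertible (1 - t) := invertibleOfNonzero h1t.ne'
    have hAinv : ((1 - t) • M)⁻¹ = (1 - t)⁻¹ • M⁻¹ := by
      rw [Matrix.inv_smul (A := M) (1 - t) hMdet.ne'.isUnit, invOf_eq_inv (1 - t)]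
    rw [hsm, det_add_vecMulVec' hAu, hAdet, hAinv] at hineq
    rw [smul_mulVec, Matrix.mulVec_smul, dotProduct_smul, dotProduct_smul,
      smul_eq_mul, smul_eq_mul, ← hcdef] at hineq
    -- hineq : (1-t)^n * M.det * (1 + (1-t)⁻¹ * (t * c)) ≤ M.det
    have g : (1 - t)^n * (1 + (1 - t)⁻¹ * (t * c)) ≤ 1 := by
      have := hineq
      nlinarith [hMdet, hineq]
    have hnsplit : (1 - t)^n = (1 - t)^(n - 1) * (1 - t) := by
      rw [← pow_succ, Nat.sub_add_cancel hn]
    have hfact : (1 - t) * (1 + (1 - t)⁻¹ * (t * c)) = 1 - t + t * c := by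
      field_simp
    have g' : (1 - t)^(n - 1) * (1 - t + t * c) ≤ 1 := by
      rw [hnsplit, mul_assoc, hfact] at g
      exact g
    have hcast : ((n - 1 : ℕ) : ℝ) = (n:ℝ) - 1 := by
      rw [Nat.cast_sub hn]; simp
    have hb : 1 - ((n:ℝ) - 1) * t ≤ (1 - t)^(n - 1) := by
      have h := one_add_mul_le_pow (show (-2:ℝ) ≤ -t by linarith) (n - 1)
      rw [hcast] at h
      calc 1 - ((n:ℝ) - 1) * t = 1 + ((n:ℝ) - 1) * (-t) := by ring
        _ ≤ (1 + -t) ^ (n - 1) := h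
        _ = (1 - t) ^ (n - 1) := by ring_nf
    have hpos : (0:ℝ) < 1 - t + t * c := by nlinarith
    have h5 := mul_le_mul_of_nonneg_right hb hpos.le
    have h6 := h5.trans g'
    have hexp : (1 - ((n:ℝ) - 1) * t) * (1 - t + t * c) = 1 + t * (c - n) - t * (t * D) := by
      rw [hDdef]; ring
    rw [hexp] at h6
    have h7 := mul_lt_mul_of_pos_left htD ht0
    linarith
  -- Part 1: positive definiteness
  have hnM : ((n : ℝ) • M).PosDef := by
    refine ⟨?_, fun x hx => ?_⟩
    · show ((n : ℝ) • M)ᴴ = (n : ℝ) • M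
      rw [conjTranspose_smul, hMpd.1.eq]
      simp
    · exact (hMpd.smul hnR).2 hx
  -- Part 2: feasibility
  have hfeas : ∀ i : Fin s, α i ⬝ᵥ (((n : ℝ) • M)⁻¹ *ᵥ α i) ≤ 1 := by
    intro i
    haveI : Invertible ((n:ℝ)) := invertibleOfNonzero hnR.ne'
    rw [Matrix.inv_smul (A := M) (n : ℝ) hMdet.ne'.isUnit, invOf_eq_inv ((n:ℝ)),
      smul_mulVec, dotProduct_smul, smul_eq_mul]
    have h1 := mul_le_mul_of_nonneg_left (hkey i) (inv_nonneg.mpr hnR.le)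
    have h2 : ((n:ℝ))⁻¹ * (n:ℝ) = 1 := inv_mul_cancel₀ hnR.ne'
    linarith
  refine ⟨hnM, hfeas, fun P hP hPfeas => ?_⟩
  -- Part 3: optimality
  have htr : (P⁻¹ * M).trace ≤ 1 := by
    rw [hM, Matrix.mul_sum]
    simp only [Matrix.mul_smul, Matrix.trace_sum, Matrix.trace_smul, trace_mul_vecMulVec']
    calc ∑ j, μ j • (α j ⬝ᵥ P⁻¹ *ᵥ α j) ≤ ∑ j, μ j * 1 := by
          refine Finset.sum_le_sum fun j _ => ?_
          rw [smul_eq_mul]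
          exact mul_le_mul_of_nonneg_left (hPfeas j) (hμ0 j)
      _ = 1 := by simp [hμ1]
  have hwd := weak_duality' hn hMpd.posSemidef hP htr
  have hdet : ((n : ℝ) • M).det = (n:ℝ)^n * M.det := by rw [det_smul]; simp
  rw [hdet]
  exact Real.log_le_log (mul_pos (pow_pos hnR n) hMdet) hwd
end

section
/- Let P be an n×n positive definite real matrix, let r, x̂, λ ∈ ℝⁿ and ρ > 0, and set v = x̂ − r + (1/ρ)λ. Define g(φ) = vᵀ(I + φP⁻¹)⁻¹ P⁻¹ (I + φP⁻¹)⁻¹ v for φ ≥ 0. Then z* is an optimal solution of the problem min_z λᵀ(x̂ − z) + (ρ/2)‖x̂ − z‖² subject to (r − z)ᵀ P⁻¹ (r − z) ≤ 1 if and only if z* = (I + η* P⁻¹)⁻¹ v + r, where η* = 0 if vᵀP⁻¹v ≤ 1, and otherwise η* is the unique nonnegative solution φ of g(φ) = 1. -/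
open Matrix


lemma dp_self_nonneg {n : ℕ} (v : Fin n → ℝ) : 0 ≤ v ⬝ᵥ v :=
  Finset.sum_nonneg fun _ _ => mul_self_nonneg _

lemma dp_swap {n : ℕ} (Q : Matrix (Fin n) (Fin n) ℝ) (hQ : Qᵀ = Q) (a b : Fin n → ℝ) :
    a ⬝ᵥ Q *ᵥ b = b ⬝ᵥ Q *ᵥ a := by
  rw [dotProduct_mulVec]
  conv_lhs => rw [← hQ]
  rw [vecMul_transpose, dotProduct_comm]

lemma key_identity {n : ℕ} (Q : Matrix (Fin n) (Fin n) ℝ) (hQ : Qᵀ = Q)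
    (u v w : Fin n → ℝ) (η : ℝ) (hueq : u + η • (Q *ᵥ u) = v) :
    (v - w) ⬝ᵥ (v - w) =
      (v - u) ⬝ᵥ (v - u) + η * (u ⬝ᵥ Q *ᵥ u) - η * (w ⬝ᵥ Q *ᵥ w)
        + (w - u) ⬝ᵥ (w - u) + η * ((w - u) ⬝ᵥ Q *ᵥ (w - u)) := by
  rw [← hueq]
  simp only [sub_dotProduct, dotProduct_sub, add_dotProduct, dotProduct_add,
    smul_dotProduct, dotProduct_smul, mulVec_sub, mulVec_add, mulVec_smul, smul_eq_mul]
  rw [dp_swap Q hQ u w, dotProduct_comm u w, dotProduct_comm u (Q *ᵥ u),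
    dotProduct_comm (Q *ᵥ u) w]
  ring

lemma obj_eq' {n : ℕ} (r xhat lam : Fin n → ℝ) (ρ : ℝ) (hρ : 0 < ρ)
    (v : Fin n → ℝ) (hv : v = xhat - r + ρ⁻¹ • lam) (z : Fin n → ℝ) :
    lam ⬝ᵥ (xhat - z) + ρ / 2 * ((xhat - z) ⬝ᵥ (xhat - z)) =
      ρ / 2 * ((v - (z - r)) ⬝ᵥ (v - (z - r))) - (lam ⬝ᵥ lam) / (2 * ρ) := by
  have h : v - (z - r) = (xhat - z) + ρ⁻¹ • lam := by rw [hv]; abel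
  rw [h]
  simp only [add_dotProduct, dotProduct_add, smul_dotProduct, dotProduct_smul, smul_eq_mul]
  rw [dotProduct_comm lam (xhat - z)]
  field_simp
  ring

/-- Characterization of the optimal solution of the QCQP-1 `z`-update
`min λᵀ(x̂ - z) + (ρ/2)‖x̂ - z‖²  s.t.  (r - z)ᵀP⁻¹(r - z) ≤ 1`:
`z*` is optimal iff `z* = (I + η*P⁻¹)⁻¹ v + r` with `v = x̂ - r + (1/ρ)λ`,
where `η* = 0` if `vᵀP⁻¹v ≤ 1` and otherwise `η*` is the unique nonnegative
solution of `g(φ) = 1` with `g(φ) = vᵀ(I + φP⁻¹)⁻¹P⁻¹(I + φP⁻¹)⁻¹v`. -/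
theorem qcqp_z_update_characterization {n : ℕ}
    (P : Matrix (Fin n) (Fin n) ℝ) (hP : P.PosDef)
    (r xhat lam : Fin n → ℝ) (ρ : ℝ) (hρ : 0 < ρ)
    (v : Fin n → ℝ) (hv : v = xhat - r + ρ⁻¹ • lam)
    (g : ℝ → ℝ)
    (hg : ∀ φ : ℝ, g φ =
      v ⬝ᵥ (((1 + φ • P⁻¹)⁻¹ * P⁻¹ * (1 + φ • P⁻¹)⁻¹) *ᵥ v))
    (η : ℝ)
    (hη : (v ⬝ᵥ (P⁻¹ *ᵥ v) ≤ 1 ∧ η = 0) ∨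
          (1 < v ⬝ᵥ (P⁻¹ *ᵥ v) ∧ 0 ≤ η ∧ g η = 1))
    (z : Fin n → ℝ) :
    ((r - z) ⬝ᵥ (P⁻¹ *ᵥ (r - z)) ≤ 1 ∧
      (∀ w : Fin n → ℝ, (r - w) ⬝ᵥ (P⁻¹ *ᵥ (r - w)) ≤ 1 →
        lam ⬝ᵥ (xhat - z) + ρ / 2 * ((xhat - z) ⬝ᵥ (xhat - z)) ≤
          lam ⬝ᵥ (xhat - w) + ρ / 2 * ((xhat - w) ⬝ᵥ (xhat - w)))) ↔
    z = (1 + η • P⁻¹)⁻¹ *ᵥ v + r := by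
  have hQ : (P⁻¹).PosDef := hP.inv
  have hQsym : (P⁻¹)ᵀ = P⁻¹ := by
    have h : (P⁻¹).IsSymm := by simpa using hQ.1
    exact h.eq
  have hQpsd : ∀ d : Fin n → ℝ, 0 ≤ d ⬝ᵥ P⁻¹ *ᵥ d := fun d => by
    simpa using hQ.posSemidef.dotProduct_mulVec_nonneg d
  have hη0 : 0 ≤ η := by
    rcases hη with ⟨_, h⟩ | ⟨_, h, _⟩
    · simp [h]
    · exact h
  set M := 1 + η • P⁻¹ with hM
  have hMpd : M.PosDef := by
    refine Matrix.PosDef.add_posSemidef Matrix.PosDef.one (Matrix.PosSemidef.of_dotProduct_mulVec_nonneg ?_ ?_)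
    · simp only [Matrix.IsHermitian, conjTranspose_smul]
      rw [hQ.1.eq]
      simp
    · intro x
      rw [smul_mulVec, dotProduct_smul]
      simp only [star_trivial, smul_eq_mul]
      exact mul_nonneg hη0 (hQpsd x)
  have hdet : IsUnit M.det := (Matrix.isUnit_iff_isUnit_det M).mp hMpd.isUnit
  set u := M⁻¹ *ᵥ v with hu
  have hMu : M *ᵥ u = v := by
    rw [hu, mulVec_mulVec, Matrix.mul_nonsing_inv _ hdet, one_mulVec]
  have hueq : u + η • (P⁻¹ *ᵥ u) = v := by
    rw [← hMu, hM]
    rw [add_mulVec, one_mulVec, smul_mulVec]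
  have hMsym : Mᵀ = M := by
    rw [hM, transpose_add, transpose_smul, hQsym, transpose_one]
  have hMinvsym : (M⁻¹)ᵀ = M⁻¹ := by rw [transpose_nonsing_inv, hMsym]
  have hqg : u ⬝ᵥ P⁻¹ *ᵥ u = g η := by
    rw [hg η, ← hM, ← mulVec_mulVec, ← mulVec_mulVec, ← hu,
      dp_swap M⁻¹ hMinvsym v (P⁻¹ *ᵥ u), ← hu, dotProduct_comm]
  have hfs : u ⬝ᵥ P⁻¹ *ᵥ u ≤ 1 ∧ η * (u ⬝ᵥ P⁻¹ *ᵥ u) = η := by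
    rcases hη with ⟨hvle, h0⟩ | ⟨_, _, hgη⟩
    · have hM1 : M = 1 := by rw [hM, h0, zero_smul, add_zero]
      have huv : u = v := by rw [hu, hM1, inv_one, one_mulVec]
      rw [huv, h0]
      exact ⟨hvle, by ring⟩
    · rw [hqg, hgη]
      exact ⟨le_refl 1, mul_one η⟩
  obtain ⟨hfeas, hslack⟩ := hfs
  -- feasibility of u + r
  have hneg : ∀ w : Fin n → ℝ, (r - w) ⬝ᵥ P⁻¹ *ᵥ (r - w) = (w - r) ⬝ᵥ P⁻¹ *ᵥ (w - r) := by
    intro w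
    rw [show r - w = -(w - r) by abel]
    rw [neg_dotProduct, mulVec_neg, dotProduct_neg, neg_neg]
  have hufeas : (r - (u + r)) ⬝ᵥ P⁻¹ *ᵥ (r - (u + r)) ≤ 1 := by
    rw [hneg, add_sub_cancel_right]
    exact hfeas
  constructor
  · rintro ⟨hzf, hopt⟩
    have h1 := hopt (u + r) hufeas
    rw [obj_eq' r xhat lam ρ hρ v hv z, obj_eq' r xhat lam ρ hρ v hv (u + r),
      add_sub_cancel_right] at h1
    have h2 : (v - (z - r)) ⬝ᵥ (v - (z - r)) ≤ (v - u) ⬝ᵥ (v - u) := by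
      have hpos : (0 : ℝ) < ρ / 2 := by linarith
      have h3 : ρ / 2 * ((v - (z - r)) ⬝ᵥ (v - (z - r))) ≤
          ρ / 2 * ((v - u) ⬝ᵥ (v - u)) := by linarith
      exact le_of_mul_le_mul_left h3 hpos
    have hKI := key_identity (P⁻¹) hQsym u v (z - r) η hueq
    have hzf' : (z - r) ⬝ᵥ P⁻¹ *ᵥ (z - r) ≤ 1 := by rw [← hneg]; exact hzf
    have hd1 : 0 ≤ (z - r - u) ⬝ᵥ (z - r - u) := dp_self_nonneg _
    have hd2 : 0 ≤ (z - r - u) ⬝ᵥ P⁻¹ *ᵥ (z - r - u) := hQpsd _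
    have hle : η * ((z - r) ⬝ᵥ P⁻¹ *ᵥ (z - r)) ≤ η := by
      nlinarith
    have hd0 : (z - r - u) ⬝ᵥ (z - r - u) = 0 := by nlinarith
    have : z - r - u = 0 := dotProduct_self_eq_zero.mp hd0
    have : z = r + u := by
      rw [sub_sub, sub_eq_zero] at this
      exact this
    rw [this, add_comm]
  · rintro rfl
    refine ⟨hufeas, ?_⟩
    intro w hw
    rw [obj_eq' r xhat lam ρ hρ v hv (u + r), obj_eq' r xhat lam ρ hρ v hv w,
      add_sub_cancel_right]
    have hKI := key_identity (P⁻¹) hQsym u v (w - r) η hueq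
    have hw' : (w - r) ⬝ᵥ P⁻¹ *ᵥ (w - r) ≤ 1 := by rw [← hneg]; exact hw
    have hd1 : 0 ≤ (w - r - u) ⬝ᵥ (w - r - u) := dp_self_nonneg _
    have hd2 : 0 ≤ (w - r - u) ⬝ᵥ P⁻¹ *ᵥ (w - r - u) := hQpsd _
    have hle : η * ((w - r) ⬝ᵥ P⁻¹ *ᵥ (w - r)) ≤ η := by nlinarith
    have hAB : (v - u) ⬝ᵥ (v - u) ≤ (v - (w - r)) ⬝ᵥ (v - (w - r)) := by linarith [hKI, hslack, hle, hd1, mul_nonneg hη0 hd2]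
    have hmul := mul_le_mul_of_nonneg_left hAB (by linarith : (0:ℝ) ≤ ρ / 2)
    linarith
end

section
/- Let P and Q be n×n real positive definite matrices, let e ∈ ℝⁿ, and let τ > 0. Then for all x, y ∈ ℝⁿ with (x − e)ᵀP⁻¹(x − e) ≤ 1 and yᵀQ⁻¹y ≤ 1, one has (x + y − e)ᵀ((1 + τ⁻¹)P + (1 + τ)Q)⁻¹(x + y − e) ≤ 1. Equivalently, the Minkowski sum E(e,P) ⊕ E(0,Q) is contained in the ellipsoid E(e, (1 + τ⁻¹)P + (1 + τ)Q); in particular the outer ellipsoid has center e. -/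
open Matrix

private lemma symm_dot {n : ℕ} {M : Matrix (Fin n) (Fin n) ℝ} (hM : Mᵀ = M)
    (x y : Fin n → ℝ) : x ⬝ᵥ (M *ᵥ y) = (M *ᵥ x) ⬝ᵥ y := by
  rw [dotProduct_mulVec, ← hM, mulVec_transpose, hM]

private lemma key_ineq {n : ℕ} {P : Matrix (Fin n) (Fin n) ℝ} (hP : P.PosDef)
    {α : ℝ} (hα : 0 < α) (w u : Fin n → ℝ) :
    2 * (w ⬝ᵥ u) ≤ α * (w ⬝ᵥ (P *ᵥ w)) + α⁻¹ * (u ⬝ᵥ (P⁻¹ *ᵥ u)) := by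
  have hdet : IsUnit P.det := isUnit_iff_ne_zero.mpr hP.det_pos.ne'
  have hPt : Pᵀ = P := by
    rw [← conjTranspose_eq_transpose_of_trivial]; exact hP.1.eq
  have hPP : P * P⁻¹ = 1 := mul_nonsing_inv P hdet
  set z : Fin n → ℝ := α • w - P⁻¹ *ᵥ u with hz
  have h0 : 0 ≤ z ⬝ᵥ (P *ᵥ z) := by
    have := hP.posSemidef.dotProduct_mulVec_nonneg z
    simpa using this
  have e1 : P *ᵥ (P⁻¹ *ᵥ u) = u := by rw [mulVec_mulVec, hPP, one_mulVec]
  have e2 : (P⁻¹ *ᵥ u) ⬝ᵥ (P *ᵥ w) = u ⬝ᵥ w := by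
    rw [symm_dot hPt, e1]
  have e3 : (P⁻¹ *ᵥ u) ⬝ᵥ u = u ⬝ᵥ (P⁻¹ *ᵥ u) := dotProduct_comm _ _
  have hexp : z ⬝ᵥ (P *ᵥ z)
      = α * α * (w ⬝ᵥ (P *ᵥ w)) - 2 * α * (w ⬝ᵥ u) + u ⬝ᵥ (P⁻¹ *ᵥ u) := by
    simp only [hz, mulVec_sub, mulVec_smul, e1, sub_dotProduct, dotProduct_sub,
      smul_dotProduct, dotProduct_smul, e2, e3, dotProduct_comm u w, smul_eq_mul]
    ring
  rw [hexp] at h0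
  have h1 : 2 * α * (w ⬝ᵥ u) ≤ α * α * (w ⬝ᵥ (P *ᵥ w)) + u ⬝ᵥ (P⁻¹ *ᵥ u) := by linarith
  have h2 : α⁻¹ * (2 * α * (w ⬝ᵥ u)) ≤ α⁻¹ * (α * α * (w ⬝ᵥ (P *ᵥ w)) + u ⬝ᵥ (P⁻¹ *ᵥ u)) :=
    mul_le_mul_of_nonneg_left h1 (inv_nonneg.mpr hα.le)
  calc 2 * (w ⬝ᵥ u) = α⁻¹ * (2 * α * (w ⬝ᵥ u)) := by field_simp
    _ ≤ α⁻¹ * (α * α * (w ⬝ᵥ (P *ᵥ w)) + u ⬝ᵥ (P⁻¹ *ᵥ u)) := h2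
    _ = α * (w ⬝ᵥ (P *ᵥ w)) + α⁻¹ * (u ⬝ᵥ (P⁻¹ *ᵥ u)) := by field_simp

/-- Minkowski-sum bounding ellipsoid: for positive definite `P, Q` and `τ > 0`,
`E(e, P) ⊕ E(0, Q) ⊆ E(e, (1 + τ⁻¹)P + (1 + τ)Q)`; in particular the outer
ellipsoid is centered at `e`. -/
theorem minkowski_sum_outer_ellipsoid {n : ℕ}
    (P Q : Matrix (Fin n) (Fin n) ℝ) (hP : P.PosDef) (hQ : Q.PosDef)
    (e : Fin n → ℝ) (τ : ℝ) (hτ : 0 < τ) :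
    ∀ x y : Fin n → ℝ,
      (x - e) ⬝ᵥ (P⁻¹ *ᵥ (x - e)) ≤ 1 →
      y ⬝ᵥ (Q⁻¹ *ᵥ y) ≤ 1 →
      (x + y - e) ⬝ᵥ (((1 + τ⁻¹) • P + (1 + τ) • Q)⁻¹ *ᵥ (x + y - e)) ≤ 1 := by
  intro x y hx hy
  set α : ℝ := 1 + τ⁻¹ with hαdef
  set β : ℝ := 1 + τ with hβdef
  have hα : 0 < α := by positivity
  have hβ : 0 < β := by positivity
  have hPh : (α • P).IsHermitian := by
    unfold Matrix.IsHermitian; rw [conjTranspose_smul, star_trivial, hP.1.eq]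
  have hQh : (β • Q).IsHermitian := by
    unfold Matrix.IsHermitian; rw [conjTranspose_smul, star_trivial, hQ.1.eq]
  have hPs : (α • P).PosDef := .of_dotProduct_mulVec_pos hPh (fun v hv => by
    rw [smul_mulVec, dotProduct_smul]; exact smul_pos hα (hP.dotProduct_mulVec_pos hv))
  have hQs : (β • Q).PosDef := .of_dotProduct_mulVec_pos hQh (fun v hv => by
    rw [smul_mulVec, dotProduct_smul]; exact smul_pos hβ (hQ.dotProduct_mulVec_pos hv))
  have hR : (α • P + β • Q).PosDef := hPs.add hQs
  set R : Matrix (Fin n) (Fin n) ℝ := α • P + β • Q with hRdef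
  have hdetR : IsUnit R.det := isUnit_iff_ne_zero.mpr hR.det_pos.ne'
  have hRt : Rᵀ = R := by
    rw [← conjTranspose_eq_transpose_of_trivial]; exact hR.1.eq
  set u : Fin n → ℝ := x - e with hu
  set v : Fin n → ℝ := y with hv
  set s : Fin n → ℝ := u + v with hs
  have hsum : x + y - e = s := by rw [hs, hu, hv]; abel
  rw [hsum]
  set w : Fin n → ℝ := R⁻¹ *ᵥ s with hw
  have hRw : R *ᵥ w = s := by
    rw [hw, mulVec_mulVec, mul_nonsing_inv R hdetR, one_mulVec]
  have hmain : s ⬝ᵥ (R⁻¹ *ᵥ s) = 2 * (w ⬝ᵥ s) - w ⬝ᵥ (R *ᵥ w) := by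
    have h1 : s ⬝ᵥ (R⁻¹ *ᵥ s) = w ⬝ᵥ s := by
      rw [hw]
      have hRit : R⁻¹ᵀ = R⁻¹ := by rw [transpose_nonsing_inv, hRt]
      rw [symm_dot hRit]
    rw [h1, hRw]
    ring
  have hws : w ⬝ᵥ s = w ⬝ᵥ u + w ⬝ᵥ v := by rw [hs, dotProduct_add]
  have hwRw : w ⬝ᵥ (R *ᵥ w) = α * (w ⬝ᵥ (P *ᵥ w)) + β * (w ⬝ᵥ (Q *ᵥ w)) := by
    rw [hRdef, add_mulVec, dotProduct_add, smul_mulVec, smul_mulVec,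
      dotProduct_smul, dotProduct_smul, smul_eq_mul, smul_eq_mul]
  have kP := key_ineq hP hα w u
  have kQ := key_ineq hQ hβ w v
  have hsum2 : α⁻¹ + β⁻¹ = 1 := by
    rw [hαdef, hβdef]
    field_simp
    ring
  have hαinv : α⁻¹ * (u ⬝ᵥ (P⁻¹ *ᵥ u)) ≤ α⁻¹ := by
    calc α⁻¹ * (u ⬝ᵥ (P⁻¹ *ᵥ u)) ≤ α⁻¹ * 1 :=
          mul_le_mul_of_nonneg_left hx (inv_nonneg.mpr hα.le)
      _ = α⁻¹ := mul_one _
  have hβinv : β⁻¹ * (v ⬝ᵥ (Q⁻¹ *ᵥ v)) ≤ β⁻¹ := by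
    calc β⁻¹ * (v ⬝ᵥ (Q⁻¹ *ᵥ v)) ≤ β⁻¹ * 1 :=
          mul_le_mul_of_nonneg_left hy (inv_nonneg.mpr hβ.le)
      _ = β⁻¹ := mul_one _
  rw [hmain, hws, hwRw]
  clear_value w s v u R β α
  linarith
end
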